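/- For every U ∈ Σ*, overline(Γd(U)) = Γd(overline(U)), i.e., the complement of the image of U under Γd equals the image under Γd of the complement of U. -/

import Mathlib

/-!
A double-rooted minimal word is determined by its left frontier: level by level it is the
shortest primitive of the next level that starts with the prescribed letter, and the run-length
encoding of that primitive is the next level with an extra `1` at each end equal to `1`.
Complementing the whole frontier therefore exchanges, at each level, an outer run pair `1, 1`
with a single run `2`, so it flips exactly the two end letters of the word. Derivation commutes
with reversal, so the reversal of the word with frontier `U` is the double-rooted minimal word
with frontier `Γd(U)`. As flipping the end letters commutes with reversal, `Γd(compl U)` and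
`compl (Γd U)` are left frontiers of the same double-rooted minimal word.
-/

namespace CInfWords

open scoped Classical

/-- Run-length encoding Δ of a word. -/
def rle : List ℕ → List ℕ
  | [] => []
  | [_] => [1]
  | a :: b :: l =>
    if a = b then
      match rle (b :: l) with
      | [] => [1]
      | c :: r => (c + 1) :: r
    else 1 :: rle (b :: l)

/-- Erase a leading `1`, if any. -/
def trim1 : List ℕ → List ℕ
  | 1 :: l => l
  | l => l

/-- The derivative `D`: the run-length encoding with the first and/or the last
symbol erased when they are equal to `1`. -/
def D (w : List ℕ) : List ℕ := trim1 ((trim1 (rle w).reverse).reverse)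

/-- Words over Σ = {1,2}. -/
def IsWord (w : List ℕ) : Prop := ∀ x ∈ w, x = 1 ∨ x = 2

/-- Words over Σ₀ = {0,1,2}. -/
def IsWord0 (w : List ℕ) : Prop := ∀ x ∈ w, x = 0 ∨ x = 1 ∨ x = 2

/-- Σ₀^{++}: words over Σ₀ that are empty or begin with a nonzero symbol. -/
def Spp (w : List ℕ) : Prop := IsWord0 w ∧ (w = [] ∨ w.headI ≠ 0)

/-- C^∞-words: every iterated derivative is a word over Σ = {1,2}. -/
def Cinf (w : List ℕ) : Prop := ∀ k, IsWord (D^[k] w)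

/-- The height of a C^∞-word: the least k with D^[k] w = ε. -/
noncomputable def height (w : List ℕ) : ℕ := sInf {k | D^[k] w = []}

/-- The root of a C^∞-word of height k > 0: its (k-1)-st derivative. -/
noncomputable def root (w : List ℕ) : List ℕ := D^[height w - 1] w

/-- `v` is a primitive of `w`. -/
def Primitive (v w : List ℕ) : Prop := IsWord v ∧ D v = w

/-- The complement: swap 1's and 2's. -/
def compl (w : List ℕ) : List ℕ := w.map (fun x => 3 - x)

/-- Minimal C^∞-words: every derivative is a shortest primitive of the next one. -/
def Minimal (w : List ℕ) : Prop :=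
  Cinf w ∧ 0 < height w ∧
    ∀ j, j + 2 ≤ height w → ∀ v, Primitive v (D^[j+1] w) → (D^[j] w).length ≤ v.length

/-- Maximal C^∞-words: every derivative is a longest primitive of the next one. -/
def Maximal (w : List ℕ) : Prop :=
  Cinf w ∧ 0 < height w ∧
    ∀ j, j + 2 ≤ height w → ∀ v, Primitive v (D^[j+1] w) → v.length ≤ (D^[j] w).length

def LeftMinimal (w : List ℕ) : Prop := ∃ v, Minimal v ∧ w <+: v
def RightMinimal (w : List ℕ) : Prop := ∃ v, Minimal v ∧ w <:+ v
def LeftMaximal (w : List ℕ) : Prop := ∃ v, Maximal v ∧ w <+: v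
def RightMaximal (w : List ℕ) : Prop := ∃ v, Maximal v ∧ w <:+ v

/-- Single-rooted minimal words. -/
def SRMin (w : List ℕ) : Prop := Minimal w ∧ (root w).length = 1

/-- Double-rooted minimal words. -/
def DRMin (w : List ℕ) : Prop := Minimal w ∧ (root w).length = 2

/-- The left frontier Ψ(w). -/
noncomputable def psi (w : List ℕ) : List ℕ :=
  (List.range (height w)).map fun i =>
    if i = 0 then w.getD 0 0
    else if (D^[i] w).getD 0 0 = 2 ∧ (D^[i-1] w).getD 0 0 ≠ (D^[i-1] w).getD 1 0
      then 0
    else (D^[i] w).getD 0 0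

/-- The single-rooted minimal word with left frontier U (if it exists). -/
noncomputable def srmOf (U : List ℕ) : List ℕ :=
  if h : ∃ w, SRMin w ∧ psi w = U then h.choose else []

/-- The double-rooted minimal word with left frontier U (if it exists). -/
noncomputable def drmOf (U : List ℕ) : List ℕ :=
  if h : ∃ w, DRMin w ∧ psi w = U then h.choose else []

/-- Γs: the right frontier of the single-rooted minimal word with left frontier U. -/
noncomputable def Gs (U : List ℕ) : List ℕ := psi (srmOf U).reverse

/-- Γd: the right frontier of the double-rooted minimal word with left frontier U. -/
noncomputable def Gd (U : List ℕ) : List ℕ := psi (drmOf U).reverse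

/-- Θ = Γs ∘ Γd. -/
noncomputable def Th (U : List ℕ) : List ℕ := Gs (Gd U)

/-- Π = Γd ∘ Γs. -/
noncomputable def Pp (U : List ℕ) : List ℕ := Gd (Gs U)

/-- One step in the graph G: from node U, the edge labeled 1 goes to U·1, the edge
labeled 2 goes to U·2, and the edge labeled 0 goes to Θ(U)·2. -/
noncomputable def step (U : List ℕ) (a : ℕ) : List ℕ :=
  if a = 1 then U ++ [1] else if a = 2 then U ++ [2] else Th U ++ [2]

/-- The endpoint of the path in G starting at the origin ε and labeled by W. -/
noncomputable def pathEnd (W : List ℕ) : List ℕ := W.foldl step []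

/-- W ∈ Σ₀^{++} labels a directed path in G from ε to U. -/
def LabelsPath (W U : List ℕ) : Prop := Spp W ∧ pathEnd W = U

/-- ‖U‖: the number of words in Σ₀^{++} labeling a path in G from ε to U. -/
noncomputable def normG (U : List ℕ) : ℕ := {W | LabelsPath W U}.ncard

/-- |U|: the length of the single-rooted minimal word with left frontier U. -/
noncomputable def len (U : List ℕ) : ℕ := (srmOf U).length

/-- u is the minimal part of w: the first (leftmost-occurring) factor of w that
is a single-rooted minimal word of the same height as w. -/
def IsMinPart (u w : List ℕ) : Prop :=
  ∃ s t, w = s ++ u ++ t ∧ SRMin u ∧ height u = height w ∧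
    ∀ u' s' t', w = s' ++ u' ++ t' → SRMin u' → height u' = height w →
      s.length ≤ s'.length

def IsLetter (a : ℕ) : Prop := a = 1 ∨ a = 2

namespace IsLetter

variable {a : ℕ}

lemma compl (h : IsLetter a) : IsLetter (3 - a) := by
  rcases h with rfl | rfl <;> simp [IsLetter]

lemma compl_compl (h : IsLetter a) : 3 - (3 - a) = a := by
  rcases h with rfl | rfl <;> rfl

lemma ne_compl (h : IsLetter a) : a ≠ 3 - a := by
  rcases h with rfl | rfl <;> decide

lemma eq_compl_of_ne {b : ℕ} (ha : IsLetter a) (hb : IsLetter b) (h : b ≠ a) : b = 3 - a := by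
  rcases ha with rfl | rfl <;> rcases hb with rfl | rfl <;> simp_all

lemma pos (h : IsLetter a) : 0 < a := by
  rcases h with rfl | rfl <;> decide

end IsLetter

lemma IsWord.cons {a : ℕ} {w : List ℕ} (ha : IsLetter a) (hw : IsWord w) : IsWord (a :: w) := by
  simpa [IsWord, IsLetter] using And.intro ha hw

lemma IsWord.of_cons {a : ℕ} {w : List ℕ} (h : IsWord (a :: w)) : IsLetter a ∧ IsWord w := by
  simpa [IsWord, IsLetter] using h

lemma IsWord.reverse {w : List ℕ} (h : IsWord w) : IsWord w.reverse :=
  fun x hx => h x (List.mem_reverse.mp hx)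

lemma IsWord.drop {w : List ℕ} (h : IsWord w) (k : ℕ) : IsWord (w.drop k) :=
  fun x hx => h x (List.mem_of_mem_drop hx)

lemma IsWord.compl {w : List ℕ} (h : IsWord w) : IsWord (compl w) := by
  intro x hx
  obtain ⟨y, hy, rfl⟩ := List.mem_map.mp hx
  exact IsLetter.compl (h y hy)

lemma IsWord.headI {w : List ℕ} (h : IsWord w) (hne : w ≠ []) : IsLetter w.headI := by
  obtain ⟨a, w, rfl⟩ := List.exists_cons_of_ne_nil hne
  exact h.of_cons.1

def ofRuns : ℕ → List ℕ → List ℕ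
  | _, [] => []
  | a, n :: X => List.replicate n a ++ ofRuns (3 - a) X

@[simp] lemma ofRuns_nil (a : ℕ) : ofRuns a [] = [] := rfl

@[simp] lemma ofRuns_cons (a n : ℕ) (X : List ℕ) :
    ofRuns a (n :: X) = List.replicate n a ++ ofRuns (3 - a) X := rfl

lemma ofRuns_append (a : ℕ) (X Y : List ℕ) :
    ofRuns a (X ++ Y) = ofRuns a X ++ ofRuns ((3 - ·)^[X.length] a) Y := by
  induction X generalizing a with
  | nil => rfl
  | cons n X ih => simp [ih, Function.iterate_succ_apply]

lemma length_ofRuns (a : ℕ) (X : List ℕ) : (ofRuns a X).length = X.sum := by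
  induction X generalizing a with
  | nil => rfl
  | cons n X ih => simp [ih]

lemma isWord_ofRuns {a : ℕ} (ha : IsLetter a) (X : List ℕ) : IsWord (ofRuns a X) := by
  induction X generalizing a with
  | nil => simp [IsWord]
  | cons n X ih =>
    intro x hx
    rcases List.mem_append.mp hx with hx | hx
    · exact (List.eq_of_mem_replicate hx) ▸ ha
    · exact ih ha.compl x hx

lemma ofRuns_eq_cons {n : ℕ} (hn : 0 < n) (a : ℕ) (X : List ℕ) :
    ∃ t, ofRuns a (n :: X) = a :: t := by
  obtain ⟨m, rfl⟩ := Nat.exists_eq_succ_of_ne_zero hn.ne'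
  exact ⟨List.replicate m a ++ ofRuns (3 - a) X, rfl⟩

lemma isLetter_iterate_compl {a : ℕ} (ha : IsLetter a) (k : ℕ) :
    IsLetter ((3 - ·)^[k] a) := by
  induction k generalizing a with
  | zero => exact ha
  | succ k ih => exact Function.iterate_succ_apply .. ▸ ih ha.compl

lemma iterate_compl_iterate_compl {a : ℕ} (ha : IsLetter a) (k : ℕ) :
    (3 - ·)^[k] ((3 - ·)^[k] a) = a := by
  induction k with
  | zero => rfl
  | succ k ih =>
    rw [Function.iterate_succ_apply, Function.iterate_succ_apply',
      (isLetter_iterate_compl ha k).compl_compl, ih]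

lemma reverse_ofRuns {a : ℕ} (ha : IsLetter a) (X : List ℕ) :
    (ofRuns a X).reverse = ofRuns ((3 - ·)^[X.length] (3 - a)) X.reverse := by
  induction X generalizing a with
  | nil => rfl
  | cons n X ih =>
    rw [ofRuns_cons, List.reverse_append, List.reverse_replicate, ih ha.compl,
      List.reverse_cons, ofRuns_append, List.length_reverse, List.length_cons,
      Function.iterate_succ_apply, ha.compl_compl,
      iterate_compl_iterate_compl ha]
    simp

section RunLength

lemma rle_cons_cons_of_ne {a b : ℕ} (h : a ≠ b) (l : List ℕ) :
    rle (a :: b :: l) = 1 :: rle (b :: l) := by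
  rw [rle, if_neg h]

lemma rle_cons_ne_nil (a : ℕ) (l : List ℕ) : rle (a :: l) ≠ [] := by
  cases l with
  | nil => simp [rle]
  | cons b l =>
    unfold rle
    split_ifs
    · split <;> simp
    · simp

lemma rle_cons_cons_self {a c : ℕ} {l r : List ℕ} (h : rle (a :: l) = c :: r) :
    rle (a :: a :: l) = (c + 1) :: r := by
  rw [rle, if_pos rfl, h]

lemma sum_rle (w : List ℕ) : (rle w).sum = w.length := by
  induction w with
  | nil => rfl
  | cons a t ih =>
    rcases t with _ | ⟨b, l⟩
    · rfl
    by_cases h : a = b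
    · subst h
      obtain ⟨c, r, hcr⟩ := List.exists_cons_of_ne_nil (rle_cons_ne_nil a l)
      rw [hcr] at ih
      simp only [rle_cons_cons_self hcr, List.sum_cons, List.length_cons] at ih ⊢
      omega
    · simp [rle_cons_cons_of_ne h, ih]
      omega

lemma pos_of_mem_rle (w : List ℕ) : ∀ n ∈ rle w, 0 < n := by
  induction w with
  | nil => simp [rle]
  | cons a t ih =>
    rcases t with _ | ⟨b, l⟩
    · simp [rle]
    by_cases h : a = b
    · subst h
      obtain ⟨c, r, hcr⟩ := List.exists_cons_of_ne_nil (rle_cons_ne_nil a l)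
      rw [hcr] at ih
      simpa [rle_cons_cons_self hcr] using fun n hn => ih n (List.mem_cons_of_mem c hn)
    · simpa [rle_cons_cons_of_ne h] using ih

lemma ofRuns_rle {w : List ℕ} (hw : IsWord w) : ofRuns w.headI (rle w) = w := by
  induction w with
  | nil => rfl
  | cons a t ih =>
    obtain ⟨ha, ht⟩ := hw.of_cons
    rcases t with _ | ⟨b, l⟩
    · rfl
    have ihv := ih ht
    by_cases h : a = b
    · subst h
      obtain ⟨c, r, hcr⟩ := List.exists_cons_of_ne_nil (rle_cons_ne_nil a l)
      rw [hcr] at ihv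
      rw [rle_cons_cons_self hcr]
      simpa [List.replicate_succ] using ihv
    · have hb : b = 3 - a := ha.eq_compl_of_ne ht.of_cons.1 (Ne.symm h)
      subst hb
      simpa [rle_cons_cons_of_ne h] using ihv

lemma rle_replicate_append {n a : ℕ} (hn : 0 < n) {l : List ℕ} (hl : l.headI ≠ a ∨ l = []) :
    rle (List.replicate n a ++ l) = n :: rle l := by
  induction n with
  | zero => omega
  | succ m ih =>
    rcases Nat.eq_zero_or_pos m with rfl | hm
    · rcases l with _ | ⟨x, t⟩
      · rfl
      · have hx : a ≠ x := by simpa [eq_comm] using hl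
        simp [rle_cons_cons_of_ne hx]
    · obtain ⟨k, rfl⟩ := Nat.exists_eq_succ_of_ne_zero hm.ne'
      have hrec := ih hm
      simp only [List.replicate_succ, List.cons_append] at hrec ⊢
      exact rle_cons_cons_self hrec

lemma rle_ofRuns {a : ℕ} (ha : IsLetter a) {X : List ℕ} (hX : ∀ n ∈ X, 0 < n) :
    rle (ofRuns a X) = X := by
  induction X generalizing a with
  | nil => rfl
  | cons n X ih =>
    simp only [List.mem_cons, forall_eq_or_imp] at hX
    rw [ofRuns_cons, rle_replicate_append hX.1, ih ha.compl hX.2]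
    rcases X with _ | ⟨m, X⟩
    · exact Or.inr rfl
    · obtain ⟨t, ht⟩ := ofRuns_eq_cons (hX.2 m List.mem_cons_self) (3 - a) X
      exact Or.inl (by simpa [ht] using ha.ne_compl.symm)

lemma rle_reverse {w : List ℕ} (hw : IsWord w) : rle w.reverse = (rle w).reverse := by
  rcases eq_or_ne w [] with rfl | hne
  · rfl
  conv_lhs => rw [← ofRuns_rle hw, reverse_ofRuns (hw.headI hne)]
  refine rle_ofRuns (isLetter_iterate_compl (hw.headI hne).compl _) ?_
  simpa using pos_of_mem_rle w

end RunLength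

section Trim

def padHead (u : List ℕ) : List ℕ := if u.headI = 1 then 1 :: u else u

/-- The run-length encoding of the shortest primitives of `u`: if `u` starts (ends) with `1`, the
encoding of a primitive needs an extra leading (trailing) `1` for `D` to erase. -/
def padEnds (u : List ℕ) : List ℕ := (padHead (padHead u).reverse).reverse

def trimLast (l : List ℕ) : List ℕ := (trim1 l.reverse).reverse

lemma D_eq_trim1_trimLast (w : List ℕ) : D w = trim1 (trimLast (rle w)) := rfl

lemma headI_append {l : List ℕ} (hl : l ≠ []) (m : List ℕ) : (l ++ m).headI = l.headI := by
  obtain ⟨a, l, rfl⟩ := List.exists_cons_of_ne_nil hl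
  rfl

@[simp] lemma trim1_one_cons (l : List ℕ) : trim1 (1 :: l) = l := rfl

lemma trim1_of_headI_ne {l : List ℕ} (h : l.headI ≠ 1) : trim1 l = l := by
  rcases l with _ | ⟨_ | _ | x, t⟩ <;> simp_all [trim1]

lemma trim1_append {l : List ℕ} (hl : l ≠ []) (m : List ℕ) :
    trim1 (l ++ m) = trim1 l ++ m := by
  rcases l with _ | ⟨_ | _ | x, t⟩ <;> simp_all [trim1]

lemma trim1_padHead (u : List ℕ) : trim1 (padHead u) = u := by
  unfold padHead
  split_ifs with h
  · rfl
  · exact trim1_of_headI_ne h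

lemma eq_padHead_of_trim1_eq {Y u : List ℕ} (h : trim1 Y = u) :
    Y = padHead u ∨ (Y = 1 :: u ∧ u.headI ≠ 1) := by
  subst h
  rcases Y with _ | ⟨_ | _ | x, t⟩ <;> simp [trim1, padHead]
  tauto

lemma sum_padHead (u : List ℕ) : (padHead u).sum = u.sum + if u.headI = 1 then 1 else 0 := by
  unfold padHead
  split_ifs <;> simp [add_comm]

lemma sum_padHead_le_of_trim1_eq {Y u : List ℕ} (h : trim1 Y = u) :
    (padHead u).sum ≤ Y.sum ∧ (Y.sum ≤ (padHead u).sum → Y = padHead u) := by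
  rcases eq_padHead_of_trim1_eq h with rfl | ⟨rfl, hu⟩
  · simp
  · simp [sum_padHead, hu]

lemma headI_reverse_of_trim1_eq {Y u : List ℕ} (hu : u ≠ []) (h : trim1 Y = u) :
    Y.reverse.headI = u.reverse.headI := by
  have hu' := headI_append (List.reverse_ne_nil_iff.mpr hu) [1]
  rcases eq_padHead_of_trim1_eq h with rfl | ⟨rfl, -⟩
  · unfold padHead
    split_ifs <;> simp [hu']
  · simp [hu']

lemma mem_padEnds {u : List ℕ} {n : ℕ} (h : n ∈ padEnds u) : n ∈ u ∨ n = 1 := by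
  unfold padEnds padHead at h
  split_ifs at h <;> simp at h <;> tauto

lemma padEnds_eq_append {u : List ℕ} (h : u.headI ≠ 1) : ∃ t, padEnds u = u ++ t := by
  unfold padEnds padHead
  rw [if_neg h]
  split_ifs <;> simp

lemma pos_of_mem_padEnds {u : List ℕ} (hu : IsWord u) : ∀ n ∈ padEnds u, 0 < n := fun n hn =>
  (mem_padEnds hn).elim (fun h => IsLetter.pos (hu n h)) (fun h => h ▸ Nat.one_pos)

lemma D_ofRuns_padEnds {a : ℕ} (ha : IsLetter a) {u : List ℕ} (hu : IsWord u) :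
    D (ofRuns a (padEnds u)) = u := by
  rw [D_eq_trim1_trimLast, rle_ofRuns ha (pos_of_mem_padEnds hu), trimLast, padEnds,
    List.reverse_reverse, trim1_padHead, List.reverse_reverse, trim1_padHead]

lemma headI_ofRuns_padEnds {a : ℕ} (ha : IsLetter a) {u : List ℕ} (hu : IsWord u)
    (hne : u ≠ []) : (ofRuns a (padEnds u)).headI = a := by
  rcases h : padEnds u with _ | ⟨n, X⟩
  · exact absurd ((D_ofRuns_padEnds ha hu).symm.trans (by rw [h]; rfl)) hne
  · obtain ⟨t, ht⟩ := ofRuns_eq_cons (pos_of_mem_padEnds hu n (h ▸ List.mem_cons_self)) a X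
    rw [ht, List.headI_cons]

lemma sum_padEnds_le_length {u v : List ℕ} (hu : u ≠ []) (h : D v = u) :
    (padEnds u).sum ≤ v.length ∧ (v.length ≤ (padEnds u).sum → rle v = padEnds u) := by
  obtain ⟨Y, hY⟩ : ∃ Y, trimLast (rle v) = Y := ⟨_, rfl⟩
  have h1 : trim1 Y = u := hY ▸ h
  have h2 : trim1 (rle v).reverse = Y.reverse := by rw [← hY, trimLast, List.reverse_reverse]
  obtain ⟨hle1, heq1⟩ := sum_padHead_le_of_trim1_eq h1
  obtain ⟨hle2, heq2⟩ := sum_padHead_le_of_trim1_eq h2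
  have hlast : (padHead u).reverse.headI = Y.reverse.headI := by
    rw [headI_reverse_of_trim1_eq hu h1, headI_reverse_of_trim1_eq hu (trim1_padHead u)]
  have hYsum : (padHead Y.reverse).sum = Y.sum + if Y.reverse.headI = 1 then 1 else 0 := by
    rw [sum_padHead, List.sum_reverse]
  have hsum : (padEnds u).sum = (padHead u).sum + if Y.reverse.headI = 1 then 1 else 0 := by
    rw [padEnds, List.sum_reverse, sum_padHead, List.sum_reverse, hlast]
  rw [List.sum_reverse] at hle2 heq2
  rw [← sum_rle, hsum]
  refine ⟨by omega, fun hle => ?_⟩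
  rw [← List.reverse_reverse (rle v), heq2 (by omega), heq1 (by omega), padEnds]

lemma trimLast_cons (a : ℕ) {l : List ℕ} (hl : l ≠ []) :
    trimLast (a :: l) = a :: trimLast l := by
  simp [trimLast, trim1_append (List.reverse_ne_nil_iff.mpr hl)]

lemma trim1_trimLast (l : List ℕ) : trim1 (trimLast l) = trimLast (trim1 l) := by
  by_cases h : l.headI = 1
  · rcases l with _ | ⟨x, t⟩
    · rfl
    obtain rfl : x = 1 := h
    rcases eq_or_ne t [] with rfl | ht
    · rfl
    · rw [trimLast_cons 1 ht]
      rfl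
  · rw [trim1_of_headI_ne h]
    rcases List.eq_nil_or_concat l with rfl | ⟨s, b, rfl⟩
    · rfl
    rw [List.concat_eq_append] at h ⊢
    rcases eq_or_ne s [] with rfl | hs
    · rcases b with _ | _ | b <;> simp_all [trimLast, trim1]
    · by_cases hb : b = 1
      · subst hb
        rw [headI_append hs] at h
        simpa [trimLast] using trim1_of_headI_ne h
      · have hb' : trimLast (s ++ [b]) = s ++ [b] := by
          simp [trimLast, trim1_of_headI_ne (l := b :: s.reverse) hb]
        rw [hb', trim1_of_headI_ne h]

lemma D_reverse {w : List ℕ} (hw : IsWord w) : D w.reverse = (D w).reverse := by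
  rw [D_eq_trim1_trimLast, D_eq_trim1_trimLast, trim1_trimLast, rle_reverse hw]
  simp [trimLast]

end Trim

section Height

variable {w : List ℕ}

lemma height_eq_of_iterate {n : ℕ} (h : D^[n] w = []) (hlt : ∀ m < n, D^[m] w ≠ []) :
    height w = n :=
  le_antisymm (Nat.sInf_le h) (not_lt.mp fun hlt' =>
    hlt _ hlt' (Nat.sInf_mem (s := {k | D^[k] w = []}) ⟨n, h⟩))

@[simp] lemma height_nil : height [] = 0 :=
  height_eq_of_iterate rfl fun _ h => absurd h (Nat.not_lt_zero _)

lemma iterate_D_height (h : 0 < height w) : D^[height w] w = [] :=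
  Nat.sInf_mem (Nat.nonempty_of_pos_sInf h)

lemma iterate_D_ne_nil {m : ℕ} (h : m < height w) : D^[m] w ≠ [] :=
  Nat.notMem_of_lt_sInf h

lemma ne_nil_of_height_pos (h : 0 < height w) : w ≠ [] :=
  iterate_D_ne_nil (m := 0) h

lemma height_D (h : 0 < height w) : height (D w) = height w - 1 := by
  refine height_eq_of_iterate ?_ fun m hm => ?_
  · rw [← Function.iterate_succ_apply, Nat.succ_eq_add_one, Nat.sub_add_cancel h]
    exact iterate_D_height h
  · rw [← Function.iterate_succ_apply]
    exact iterate_D_ne_nil (by omega)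

lemma Cinf.isWord (h : Cinf w) : IsWord w := h 0

lemma Cinf.derive (h : Cinf w) : Cinf (D w) := fun k =>
  Function.iterate_succ_apply CInfWords.D k w ▸ h (k + 1)

lemma iterate_D_reverse (h : Cinf w) (k : ℕ) : D^[k] w.reverse = (D^[k] w).reverse := by
  induction k with
  | zero => rfl
  | succ k ih =>
    rw [Function.iterate_succ_apply', Function.iterate_succ_apply', ih, D_reverse (h k)]

lemma Cinf.reverse (h : Cinf w) : Cinf w.reverse := fun k => by
  rw [iterate_D_reverse h]
  exact (h k).reverse

lemma height_reverse (h : Cinf w) : height w.reverse = height w := by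
  simp only [height, iterate_D_reverse h, List.reverse_eq_nil_iff]

lemma Minimal.reverse (h : Minimal w) : Minimal w.reverse := by
  obtain ⟨hc, hpos, hmin⟩ := h
  refine ⟨hc.reverse, (height_reverse hc).symm ▸ hpos, fun j hj v hv => ?_⟩
  rw [height_reverse hc] at hj
  rw [iterate_D_reverse hc] at hv ⊢
  have hv' : Primitive v.reverse (D^[j + 1] w) := by
    rw [Primitive, D_reverse hv.1, hv.2, List.reverse_reverse]
    exact ⟨hv.1.reverse, rfl⟩
  simpa using hmin j hj _ hv'

lemma DRMin.reverse (h : DRMin w) : DRMin w.reverse := by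
  refine ⟨h.1.reverse, ?_⟩
  rw [root, height_reverse h.1.1, iterate_D_reverse h.1.1, List.length_reverse]
  exact h.2

end Height

section MinimalWords

@[simp] lemma psi_nil : psi [] = [] := by
  simp [psi]

lemma psi_length (w : List ℕ) : (psi w).length = height w := by
  simp [psi]

lemma getD_zero_eq_headI (l : List ℕ) : l.getD 0 0 = l.headI := by
  cases l <;> rfl

variable {w : List ℕ}

lemma psi_cons (hpos : 0 < height w)
    (hz : ¬((D w).getD 0 0 = 2 ∧ w.getD 0 0 ≠ w.getD 1 0)) :
    psi w = w.getD 0 0 :: psi (D w) := by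
  obtain ⟨k, hk⟩ : ∃ k, height w = k + 1 := ⟨height w - 1, by omega⟩
  unfold psi
  rw [height_D hpos, hk, Nat.add_sub_cancel, List.range_succ_eq_map, List.map_cons, List.map_map]
  congr 1
  refine List.map_congr_left fun i _ => ?_
  rcases i with _ | j
  · simp only [Function.comp_apply]
    rw [if_neg (Nat.succ_ne_zero 0)]
    exact (if_neg hz).trans (if_pos trivial).symm
  · simp [Function.iterate_succ_apply]

lemma Minimal.derive (h : Minimal w) (h2 : 2 ≤ height w) : Minimal (D w) := by
  obtain ⟨hc, hpos, hmin⟩ := h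
  refine ⟨hc.derive, by rw [height_D hpos]; omega, fun j hj v hv => ?_⟩
  rw [height_D hpos] at hj
  simp only [← Function.iterate_succ_apply] at hv ⊢
  exact hmin (j + 1) (by omega) v hv

lemma root_D (h2 : 2 ≤ height w) : root (D w) = root w := by
  rw [root, root, height_D (by omega), ← Function.iterate_succ_apply]
  congr 1
  omega

lemma Minimal.eq_ofRuns (h : Minimal w) (h2 : 2 ≤ height w) :
    w = ofRuns w.headI (padEnds (D w)) := by
  have hw : IsWord w := h.1.isWord
  have hD : IsWord (D w) := h.1.derive.isWord
  have hDne : D w ≠ [] := iterate_D_ne_nil (m := 1) (by omega)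
  have ha : IsLetter w.headI := hw.headI (ne_nil_of_height_pos h.2.1)
  have hprim : Primitive (ofRuns w.headI (padEnds (D w))) (D w) :=
    ⟨isWord_ofRuns ha _, D_ofRuns_padEnds ha hD⟩
  have hle : w.length ≤ (padEnds (D w)).sum := by
    simpa [length_ofRuns] using h.2.2 0 h2 _ hprim
  rw [← (sum_padEnds_le_length hDne rfl).2 hle, ofRuns_rle hw]

lemma Minimal.psi_eq (h : Minimal w) : psi w = w.headI :: psi (D w) := by
  rw [psi_cons h.2.1, getD_zero_eq_headI]
  rintro ⟨hD2, hne⟩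
  have h2 : 2 ≤ height w := by
    by_contra hlt
    have h1 : height w = 1 := by have := h.2.1; omega
    have hD : D w = [] := by simpa [h1] using iterate_D_height h.2.1
    simp [hD] at hD2
  have hDne : D w ≠ [] := iterate_D_ne_nil (m := 1) (by omega)
  obtain ⟨u, s, hu⟩ := List.exists_cons_of_ne_nil hDne
  obtain rfl : u = 2 := by simpa [hu] using hD2
  obtain ⟨t, ht⟩ := padEnds_eq_append (u := D w) (by simp [hu])
  rw [h.eq_ofRuns h2, ht, hu] at hne
  simp [List.replicate] at hne

lemma Minimal.isWord_psi {w : List ℕ} (h : Minimal w) : IsWord (psi w) := by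
  induction hn : height w generalizing w with
  | zero => exact absurd h.2.1 (by omega)
  | succ n ih =>
    rw [h.psi_eq]
    refine IsWord.cons (h.1.isWord.headI (ne_nil_of_height_pos h.2.1)) ?_
    rcases Nat.eq_zero_or_pos n with rfl | hn'
    · have hD : D w = [] := by simpa [hn] using iterate_D_height h.2.1
      simp [hD, IsWord]
    · exact ih (h.derive (by omega)) (by rw [height_D h.2.1]; omega)

end MinimalWords

section DoubleRooted

/-- The double-rooted minimal word with left frontier `V`, built up from its root `[a, 3 - a]` by
shortest primitives. -/
def drmWord : List ℕ → List ℕ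
  | [] => []
  | [a] => [a, 3 - a]
  | a :: b :: V => ofRuns a (padEnds (drmWord (b :: V)))

variable {V : List ℕ}

lemma drmWord_cons (a : ℕ) (hV : V ≠ []) :
    drmWord (a :: V) = ofRuns a (padEnds (drmWord V)) := by
  obtain ⟨b, V, rfl⟩ := List.exists_cons_of_ne_nil hV
  rfl

lemma isWord_drmWord (hV : IsWord V) : IsWord (drmWord V) := by
  induction V with
  | nil => simp [drmWord, IsWord]
  | cons a V ih =>
    rcases eq_or_ne V [] with rfl | hne
    · exact IsWord.cons hV.of_cons.1 (IsWord.cons hV.of_cons.1.compl (by simp [IsWord]))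
    · rw [drmWord_cons a hne]
      exact isWord_ofRuns hV.of_cons.1 _

lemma D_drmWord (hV : IsWord V) : D (drmWord V) = drmWord V.tail := by
  rcases V with _ | ⟨a, _ | ⟨b, V⟩⟩
  · rfl
  · simp [drmWord, D, rle, hV.of_cons.1.ne_compl, trim1]
  · rw [drmWord_cons a (List.cons_ne_nil b V), D_ofRuns_padEnds hV.of_cons.1
      (isWord_drmWord hV.of_cons.2)]
    rfl

lemma iterate_D_drmWord (hV : IsWord V) (i : ℕ) : D^[i] (drmWord V) = drmWord (V.drop i) := by
  induction i with
  | zero => rfl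
  | succ i ih =>
    rw [Function.iterate_succ_apply', ih, D_drmWord (hV.drop i), List.tail_drop]

lemma drmWord_ne_nil (hV : IsWord V) (hne : V ≠ []) : drmWord V ≠ [] := by
  induction V with
  | nil => exact absurd rfl hne
  | cons a V ih =>
    rcases eq_or_ne V [] with rfl | hV'
    · simp [drmWord]
    · intro h
      have hD := D_drmWord hV
      rw [h, List.tail_cons] at hD
      exact ih hV.of_cons.2 hV' hD.symm

lemma headI_drmWord (hV : IsWord V) (hne : V ≠ []) : (drmWord V).headI = V.headI := by
  obtain ⟨a, V, rfl⟩ := List.exists_cons_of_ne_nil hne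
  rcases eq_or_ne V [] with rfl | hV'
  · rfl
  · rw [drmWord_cons a hV', headI_ofRuns_padEnds hV.of_cons.1 (isWord_drmWord hV.of_cons.2)
      (drmWord_ne_nil hV.of_cons.2 hV'), List.headI_cons]

lemma height_drmWord (hV : IsWord V) : height (drmWord V) = V.length := by
  refine height_eq_of_iterate ?_ fun m hm => ?_
  · rw [iterate_D_drmWord hV, List.drop_length]
    rfl
  · rw [iterate_D_drmWord hV]
    exact drmWord_ne_nil (hV.drop m) (by simpa using hm)

lemma drMin_drmWord (hV : IsWord V) (hne : V ≠ []) : DRMin (drmWord V) := by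
  have hlen := List.length_pos_of_ne_nil hne
  refine ⟨⟨fun k => ?_, ?_, fun j hj v hv => ?_⟩, ?_⟩
  · rw [iterate_D_drmWord hV]
    exact isWord_drmWord (hV.drop k)
  · rwa [height_drmWord hV]
  · rw [height_drmWord hV] at hj
    rw [iterate_D_drmWord hV] at hv ⊢
    obtain ⟨c, hc⟩ : ∃ c, V.drop j = c :: V.drop (j + 1) :=
      ⟨V[j], List.drop_eq_getElem_cons (by omega)⟩
    have hne' : V.drop (j + 1) ≠ [] := by simp; omega
    rw [hc, drmWord_cons c hne', length_ofRuns]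
    exact (sum_padEnds_le_length (drmWord_ne_nil (hV.drop _) hne') hv.2).1
  · rw [root, height_drmWord hV, iterate_D_drmWord hV, List.drop_length_sub_one hne]
    rfl

lemma psi_drmWord (hV : IsWord V) : psi (drmWord V) = V := by
  induction V with
  | nil => simp [drmWord]
  | cons a V ih =>
    rw [(drMin_drmWord hV (List.cons_ne_nil a V)).1.psi_eq, D_drmWord hV,
      headI_drmWord hV (List.cons_ne_nil a V), List.tail_cons, ih hV.of_cons.2, List.headI_cons]

lemma DRMin.drmWord_psi {w : List ℕ} (hw : DRMin w) : drmWord (psi w) = w := by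
  induction hn : height w generalizing w with
  | zero => exact absurd hw.1.2.1 (by omega)
  | succ n ih =>
    have hx : IsLetter w.headI := hw.1.1.isWord.headI (ne_nil_of_height_pos hw.1.2.1)
    rcases Nat.eq_zero_or_pos n with rfl | hn0
    · have hD : D w = [] := by simpa [hn] using iterate_D_height hw.1.2.1
      obtain ⟨x, y, rfl⟩ : ∃ x y, w = [x, y] :=
        List.length_eq_two.mp (by simpa [root, hn] using hw.2)
      have hy : y = 3 - x := by
        refine hx.eq_compl_of_ne (hw.1.1.isWord y (by simp)) fun hxy => ?_
        subst hxy
        simp [D, rle] at hD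
        exact absurd hD (by decide)
      rw [hw.1.psi_eq, hD, psi_nil, hy]
      rfl
    · have h2 : 2 ≤ height w := by omega
      have hD : DRMin (D w) := ⟨hw.1.derive h2, by rw [root_D h2]; exact hw.2⟩
      have hpsi : psi (D w) ≠ [] := by
        rw [← List.length_pos_iff_ne_nil, psi_length, height_D hw.1.2.1]
        omega
      rw [hw.1.psi_eq, drmWord_cons _ hpsi, ih hD (by rw [height_D hw.1.2.1]; omega),
        ← hw.1.eq_ofRuns h2]

lemma drmOf_eq (hV : IsWord V) : drmOf V = drmWord V := by
  rcases eq_or_ne V [] with rfl | hne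
  · refine dif_neg fun ⟨w, hw, hpsi⟩ => ?_
    have := psi_length w
    simp [hpsi] at this
    exact hw.1.2.1.ne this
  · have hex : ∃ w, DRMin w ∧ psi w = V := ⟨_, drMin_drmWord hV hne, psi_drmWord hV⟩
    rw [drmOf, dif_pos hex]
    calc hex.choose = drmWord (psi hex.choose) := hex.choose_spec.1.drmWord_psi.symm
      _ = drmWord V := by rw [hex.choose_spec.2]

end DoubleRooted

section Complement

def EndsFlipped (w w' : List ℕ) : Prop :=
  ∃ c M d, w = c :: (M ++ [d]) ∧ w' = (3 - c) :: (M ++ [3 - d])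

variable {w w' : List ℕ}

lemma EndsFlipped.reverse (h : EndsFlipped w w') : EndsFlipped w.reverse w'.reverse := by
  obtain ⟨c, M, d, rfl, rfl⟩ := h
  exact ⟨d, M.reverse, c, by simp, by simp⟩

lemma EndsFlipped.unique {w'' : List ℕ} (h : EndsFlipped w w') (h' : EndsFlipped w w'') :
    w' = w'' := by
  obtain ⟨c, M, d, rfl, rfl⟩ := h
  obtain ⟨c', M', d', h, rfl⟩ := h'
  obtain ⟨rfl, rfl, rfl⟩ : c = c' ∧ M = M' ∧ d = d' := by simpa using h
  rfl

lemma endsFlipped_cons_cons (a x g : ℕ) (R : List ℕ) {y y' : ℕ} (hy : y' = 3 - y) :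
    EndsFlipped (a :: x :: (R ++ [g, y])) ((3 - a) :: x :: (R ++ [g, y'])) :=
  ⟨a, x :: (R ++ [g]), y, by simp, by simp [hy]⟩

lemma padEnds_cons_append {c d : ℕ} (hc : IsLetter c) (hd : IsLetter d) (M : List ℕ) :
    padEnds (c :: (M ++ [d])) = padHead [c] ++ M ++ padHead [d] := by
  rcases hc with rfl | rfl <;> rcases hd with rfl | rfl <;> simp [padEnds, padHead]

/-- At each end the padding exchanges the runs `1, 1` for a single run `2` and back, which
changes only the outer letter. -/
lemma EndsFlipped.ofRuns_padEnds {u u' : List ℕ} (h : EndsFlipped u u') (hu : IsWord u) {a : ℕ}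
    (ha : IsLetter a) : EndsFlipped (ofRuns a (padEnds u)) (ofRuns (3 - a) (padEnds u')) := by
  obtain ⟨c, M, d, rfl, rfl⟩ := h
  have hc : IsLetter c := hu.of_cons.1
  have hd : IsLetter d := hu.of_cons.2 d (by simp)
  have hg := isLetter_iterate_compl ha M.length
  have hg' := isLetter_iterate_compl ha.compl M.length
  rw [padEnds_cons_append hc hd, padEnds_cons_append hc.compl hd.compl, ofRuns_append,
    ofRuns_append, ofRuns_append, ofRuns_append]
  rcases hc with rfl | rfl <;> rcases hd with rfl | rfl <;>
    simp [padHead, Function.iterate_succ_apply, ha.compl_compl] <;>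
    refine endsFlipped_cons_cons _ _ _ _ ?_
  · exact hg.compl_compl.symm
  · rfl
  · exact hg'.compl_compl.symm
  · rfl

variable {V : List ℕ}

lemma endsFlipped_drmWord_compl (hV : IsWord V) (hne : V ≠ []) :
    EndsFlipped (drmWord V) (drmWord (compl V)) := by
  induction V with
  | nil => exact absurd rfl hne
  | cons a V ih =>
    have ha := hV.of_cons.1
    rcases eq_or_ne V [] with rfl | hV'
    · exact ⟨a, [], 3 - a, rfl, by simp [drmWord, CInfWords.compl, ha.compl_compl]⟩
    · have hcV : compl V ≠ [] := by simpa [CInfWords.compl] using hV'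
      rw [drmWord_cons a hV', show compl (a :: V) = (3 - a) :: compl V from rfl,
        drmWord_cons _ hcV]
      exact (ih hV.of_cons.2 hV').ofRuns_padEnds (isWord_drmWord hV.of_cons.2) ha

end Complement

section RightFrontier

variable {U : List ℕ}

lemma Gd_eq (hU : IsWord U) : Gd U = psi (drmWord U).reverse := by
  rw [Gd, drmOf_eq hU]

lemma drmWord_Gd (hU : IsWord U) (hne : U ≠ []) : drmWord (Gd U) = (drmWord U).reverse := by
  rw [Gd_eq hU]
  exact (drMin_drmWord hU hne).reverse.drmWord_psi

lemma isWord_Gd (hU : IsWord U) (hne : U ≠ []) : IsWord (Gd U) := by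
  rw [Gd_eq hU]
  exact (drMin_drmWord hU hne).reverse.1.isWord_psi

lemma Gd_ne_nil (hU : IsWord U) (hne : U ≠ []) : Gd U ≠ [] := by
  rw [Gd_eq hU, ← List.length_pos_iff_ne_nil, psi_length]
  exact (drMin_drmWord hU hne).reverse.1.2.1

end RightFrontier

/-- Γd commutes with complementation. -/
theorem gammad_compl (U : List ℕ) (hU : IsWord U) :
    compl (Gd U) = Gd (compl U) := by
  rcases eq_or_ne U [] with rfl | hne
  · simp [Gd_eq hU, drmWord, CInfWords.compl]
  have hcne : compl U ≠ [] := by simpa [CInfWords.compl] using hne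
  have hG := isWord_Gd hU hne
  have hcG := isWord_Gd hU.compl hcne
  -- both are `drmWord (Gd U)` with its end letters flipped
  have key : drmWord (compl (Gd U)) = drmWord (Gd (compl U)) := by
    refine (endsFlipped_drmWord_compl hG (Gd_ne_nil hU hne)).unique ?_
    rw [drmWord_Gd hU hne, drmWord_Gd hU.compl hcne]
    exact (endsFlipped_drmWord_compl hU hne).reverse
  rw [← psi_drmWord hG.compl, key, psi_drmWord hcG]

end CInfWords
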